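/- arXiv:1203.3985 — 11 statements merged into one kernel-verified Lean document; each statement's English description precedes it below -/
import Mathlib

section
/- Let J and Ω be real n×n matrices and set M := Ω·J + J·Ω. Then for every λ ∈ ℝ, [M + λ·J², Ω + λ·J] = [M, Ω], where [X,Y] := XY − YX. (Manakov's Lax form of the Euler equations: the rigid-body equation Ṁ = [M,Ω] with M = ΩJ + JΩ is equivalent to d/dt(M + λJ²) = [M + λJ², Ω + λJ] for all λ.) -/
open Matrix

/-- Manakov's Lax form of the Euler equations: for `M = Ω·J + J·Ω` and every `λ ∈ ℝ`,
`[M + λ·J², Ω + λ·J] = [M, Ω]`, where `[X,Y] = XY − YX`.  Hence the rigid-body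
equation `Ṁ = [M,Ω]` is equivalent to `d/dt (M + λJ²) = [M + λJ², Ω + λJ]` for all `λ`. -/
theorem manakov_lax_form (n : ℕ) (J Ω : Matrix (Fin n) (Fin n) ℝ) (lam : ℝ) :
    (Ω * J + J * Ω + lam • (J * J)) * (Ω + lam • J) -
        (Ω + lam • J) * (Ω * J + J * Ω + lam • (J * J)) =
      (Ω * J + J * Ω) * Ω - Ω * (Ω * J + J * Ω) := by
  noncomm_ring
  module
end

section
/- Let J be a fixed real n×n matrix and let M, Ω : ℝ → (real n×n matrices) satisfy, for every t ∈ ℝ: M(t) = Ω(t)·J + J·Ω(t), and M is differentiable at t with derivative M(t)·Ω(t) − Ω(t)·M(t). Then for every λ ∈ ℝ and every natural number k, the function t ↦ trace((M(t) + λ·J²)^k) is constant on ℝ; that is, the functions f_{λ,k}(M) = Tr((M + λJ²)^k) are first integrals of the Euler equations. -/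
/-!
Euler's equations are a Lax equation with spectral parameter: for `L_λ = M + λJ²` and
`B_λ = Ω + λJ` one has `[L_λ, B_λ] = [M, Ω]` (the cross terms cancel because `M = ΩJ + JΩ`),
so `L_λ` evolves by `L̇_λ = [L_λ, B_λ]`. Then `(L_λ^k)˙ = [L_λ^k, B_λ]` by the product rule, and
the trace of a commutator vanishes, so `Tr(L_λ^k)` has zero derivative and is constant.
-/

open Matrix

attribute [local instance] Matrix.normedAddCommGroup Matrix.normedSpace

theorem commutator_spectral_shift_eq {R A : Type*} [CommRing R] [Ring A] [Algebra R A]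
    (J Ω : A) (lam : R) :
    (Ω * J + J * Ω + lam • (J * J)) * (Ω + lam • J) -
        (Ω + lam • J) * (Ω * J + J * Ω + lam • (J * J)) =
      (Ω * J + J * Ω) * Ω - Ω * (Ω * J + J * Ω) := by
  simp only [mul_add, add_mul, smul_mul_assoc, mul_smul_comm, smul_add, mul_assoc]
  abel

namespace Matrix

variable {𝕜 m : Type*} [RCLike 𝕜] [Fintype m]

-- The sup norm on matrices is not submultiplicative, so `HasDerivAt.mul` (for normed rings)
-- does not apply; multiplication is used as a continuous bilinear map instead.
theorem hasDerivAt_mul {f g : 𝕜 → Matrix m m 𝕜} {f' g' : Matrix m m 𝕜} {t : 𝕜}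
    (hf : HasDerivAt f f' t) (hg : HasDerivAt g g' t) :
    HasDerivAt (fun u => f u * g u) (f t * g' + f' * g t) t :=
  (LinearMap.mul 𝕜 (Matrix m m 𝕜)).toContinuousBilinearMap.hasDerivAt_of_bilinear
    (fun _ => hf) (fun _ => hg)

variable [DecidableEq m]

theorem hasDerivAt_pow_of_lax {L : 𝕜 → Matrix m m 𝕜} {B : Matrix m m 𝕜} {t : 𝕜}
    (hL : HasDerivAt L (L t * B - B * L t) t) (k : ℕ) :
    HasDerivAt (fun u => L u ^ k) (L t ^ k * B - B * L t ^ k) t := by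
  induction k with
  | zero =>
    simp only [pow_zero, one_mul, mul_one, sub_self]
    exact hasDerivAt_const t 1
  | succ k ih =>
    simp only [pow_succ]
    exact (hasDerivAt_mul ih hL).congr_deriv (by noncomm_ring)

theorem hasDerivAt_trace_pow_of_lax {L : 𝕜 → Matrix m m 𝕜} {B : Matrix m m 𝕜} {t : 𝕜}
    (hL : HasDerivAt L (L t * B - B * L t) t) (k : ℕ) :
    HasDerivAt (fun u => (L u ^ k).trace) 0 t := by
  refine ((traceLinearMap m 𝕜 𝕜).toContinuousLinearMap.hasFDerivAt.comp_hasDerivAt t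
    (hasDerivAt_pow_of_lax hL k)).congr_deriv ?_
  change (L t ^ k * B - B * L t ^ k).trace = 0
  rw [trace_sub, trace_mul_comm, sub_self]

theorem trace_pow_eq_of_lax {L B : 𝕜 → Matrix m m 𝕜}
    (hL : ∀ t, HasDerivAt L (L t * B t - B t * L t) t) (k : ℕ) (s t : 𝕜) :
    (L s ^ k).trace = (L t ^ k).trace :=
  have h := fun u => hasDerivAt_trace_pow_of_lax (hL u) k
  is_const_of_deriv_eq_zero (fun u => (h u).differentiableAt) (fun u => (h u).deriv) s t

end Matrix

/-- The functions `f_{λ,k}(M) = Tr((M + λJ²)^k)` are first integrals of the Euler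
equations `Ṁ = [M, Ω]`, `M = Ω·J + J·Ω`: if `M, Ω : ℝ → Matrix` satisfy the Euler
equations, then for every `λ ∈ ℝ` and `k ∈ ℕ` the function
`t ↦ Tr((M(t) + λ·J²)^k)` is constant on `ℝ`. -/
theorem trace_power_first_integral (n : ℕ) (J : Matrix (Fin n) (Fin n) ℝ)
    (M Ω : ℝ → Matrix (Fin n) (Fin n) ℝ)
    (hM : ∀ t : ℝ, M t = Ω t * J + J * Ω t)
    (hderiv : ∀ t : ℝ, HasDerivAt M (M t * Ω t - Ω t * M t) t) :
    ∀ (lam : ℝ) (k : ℕ) (s t : ℝ),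
      ((M s + lam • (J * J)) ^ k).trace = ((M t + lam • (J * J)) ^ k).trace := by
  intro lam k
  refine trace_pow_eq_of_lax (B := fun t => Ω t + lam • J) (fun t => ?_) k
  refine ((hderiv t).add_const (lam • (J * J))).congr_deriv ?_
  rw [hM t]
  exact (commutator_spectral_shift_eq J (Ω t) lam).symm
end

section
/- Let J be a real diagonal n×n matrix whose diagonal entries are pairwise distinct, and let Ω be a real skew-symmetric n×n matrix. Set M := Ω·J + J·Ω. Then [M, Ω] = 0 if and only if Ω² is a diagonal matrix (i.e. (Ω²)_{ij} = 0 for all i ≠ j). -/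
open Matrix

/-- Let `J` be a real diagonal matrix with pairwise distinct diagonal entries and let
`Ω` be skew-symmetric.  With `M = Ω·J + J·Ω`, one has `[M, Ω] = 0` if and only if
`Ω²` is a diagonal matrix. -/
theorem stationary_iff_omega_sq_diag (n : ℕ) (J Ω : Matrix (Fin n) (Fin n) ℝ)
    (hJdiag : J.IsDiag) (hJdist : ∀ i j : Fin n, i ≠ j → J i i ≠ J j j)
    (hΩ : Ωᵀ = -Ω) :
    (Ω * J + J * Ω) * Ω - Ω * (Ω * J + J * Ω) = 0 ↔ (Ω * Ω).IsDiag := by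
  have hJ : J = Matrix.diagonal (fun i => J i i) := by
    ext i j
    by_cases h : i = j
    · subst h; simp [Matrix.diagonal]
    · simp [Matrix.diagonal, h, hJdiag h]
  have key : (Ω * J + J * Ω) * Ω - Ω * (Ω * J + J * Ω)
      = J * (Ω * Ω) - (Ω * Ω) * J := by noncomm_ring
  rw [key]
  constructor
  · intro h i j hij
    have h' := congrFun (congrFun h i) j
    rw [hJ] at h'
    simp only [Matrix.sub_apply, Matrix.diagonal_mul, Matrix.mul_diagonal,
      Matrix.zero_apply] at h'
    have : (J i i - J j j) * (Ω * Ω) i j = 0 := by ring_nf; ring_nf at h'; linarith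
    rcases mul_eq_zero.mp this with h0 | h0
    · exact absurd (sub_eq_zero.mp h0) (hJdist i j hij)
    · exact h0
  · intro h
    ext i j
    by_cases hij : i = j
    · subst hij
      rw [hJ]
      simp [Matrix.diagonal_mul, Matrix.mul_diagonal, mul_comm]
    · rw [hJ]
      simp [Matrix.diagonal_mul, Matrix.mul_diagonal, h hij]
end

section
/- Let J and Ω be real n×n matrices, let s ∈ ℝ, and assume that J + s·I is invertible. Set M := Ω·J + J·Ω, A := J² − s²·I, and F := −(J + s·I)⁻¹·Ω·(J + s·I)⁻¹. Then M·F·A − A·F·M = M·Ω − Ω·M. (This identity expresses that the Euler equations Ṁ = [M,Ω] are Hamiltonian with respect to every Poisson bracket P_λ of the pencil, λ = s², with Hamiltonian H_λ(M) = −½·Tr((J + √λ·I)⁻¹·Ω·(J + √λ·I)⁻¹·M): the Hamiltonian vector field of a function with differential F with respect to P_λ at M is M·F·A − A·F·M.) -/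
open Matrix

/-- The Euler equations are Hamiltonian with respect to every bracket of the pencil:
for `M = Ω·J + J·Ω`, `A = J² − s²·I` and `F = −(J + s·I)⁻¹·Ω·(J + s·I)⁻¹`
(the differential of the Hamiltonian `H_λ`, `λ = s²`), assuming `J + s·I` invertible,
one has `M·F·A − A·F·M = M·Ω − Ω·M`. -/
theorem euler_biHamiltonian (n : ℕ) (J Ω : Matrix (Fin n) (Fin n) ℝ) (s : ℝ)
    (hinv : IsUnit (J + s • (1 : Matrix (Fin n) (Fin n) ℝ))) :
    let M : Matrix (Fin n) (Fin n) ℝ := Ω * J + J * Ω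
    let A : Matrix (Fin n) (Fin n) ℝ := J * J - (s ^ 2) • (1 : Matrix (Fin n) (Fin n) ℝ)
    let F : Matrix (Fin n) (Fin n) ℝ :=
      -((J + s • (1 : Matrix (Fin n) (Fin n) ℝ))⁻¹ * Ω *
        (J + s • (1 : Matrix (Fin n) (Fin n) ℝ))⁻¹)
    M * F * A - A * F * M = M * Ω - Ω * M := by
  intro M A F
  set B : Matrix (Fin n) (Fin n) ℝ := J + s • (1 : Matrix (Fin n) (Fin n) ℝ) with hBdef
  set C : Matrix (Fin n) (Fin n) ℝ := J - s • (1 : Matrix (Fin n) (Fin n) ℝ) with hCdef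
  have h1 : B * B⁻¹ = 1 := Matrix.mul_nonsing_inv _ ((Matrix.isUnit_iff_isUnit_det _).mp hinv)
  have h2 : B⁻¹ * B = 1 := Matrix.nonsing_inv_mul _ ((Matrix.isUnit_iff_isUnit_det _).mp hinv)
  have hA1 : A = B * C := by
    simp only [hBdef, hCdef, A, Matrix.add_mul, Matrix.mul_sub, Matrix.smul_mul,
      Matrix.mul_smul, Matrix.one_mul, Matrix.mul_one, smul_smul, sq]
    module
  have hA2 : A = C * B := by
    simp only [hBdef, hCdef, A, Matrix.sub_mul, Matrix.mul_add, Matrix.smul_mul,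
      Matrix.mul_smul, Matrix.one_mul, Matrix.mul_one, smul_smul, sq]
    module
  have hM1 : M = Ω * B + C * Ω := by
    simp only [hBdef, hCdef, M, Matrix.mul_add, Matrix.sub_mul, Matrix.mul_smul,
      Matrix.smul_mul, Matrix.mul_one, Matrix.one_mul]
    module
  have hM2 : M = B * Ω + Ω * C := by
    simp only [hBdef, hCdef, M, Matrix.add_mul, Matrix.mul_sub, Matrix.mul_smul,
      Matrix.smul_mul, Matrix.mul_one, Matrix.one_mul]
    module
  have hFA : F * A = -(B⁻¹ * Ω * C) := by
    simp only [F, hA1]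
    calc -(B⁻¹ * Ω * B⁻¹) * (B * C) = -(B⁻¹ * Ω * (B⁻¹ * B) * C) := by noncomm_ring
    _ = -(B⁻¹ * Ω * C) := by rw [h2]; noncomm_ring
  have hAF : A * F = -(C * Ω * B⁻¹) := by
    simp only [F, hA2]
    calc (C * B) * -(B⁻¹ * Ω * B⁻¹) = -(C * (B * B⁻¹) * Ω * B⁻¹) := by noncomm_ring
    _ = -(C * Ω * B⁻¹) := by rw [h1]; noncomm_ring
  have e1 : M * (F * A) = -(Ω * Ω * C) - C * Ω * B⁻¹ * Ω * C := by
    rw [hFA, hM1]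
    calc (Ω * B + C * Ω) * -(B⁻¹ * Ω * C)
        = -(Ω * (B * B⁻¹) * Ω * C) - C * Ω * B⁻¹ * Ω * C := by noncomm_ring
    _ = _ := by rw [h1]; noncomm_ring
  have e2 : (A * F) * M = -(C * Ω * Ω) - C * Ω * B⁻¹ * Ω * C := by
    rw [hAF]
    conv_lhs => rw [hM2]
    calc -(C * Ω * B⁻¹) * (B * Ω + Ω * C)
        = -(C * Ω * (B⁻¹ * B) * Ω) - C * Ω * B⁻¹ * Ω * C := by noncomm_ring
    _ = _ := by rw [h2]; noncomm_ring
  have key : M * F * A - A * F * M = C * Ω * Ω - Ω * Ω * C := by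
    rw [Matrix.mul_assoc M F A, e1, e2]; noncomm_ring
  rw [key]
  simp only [hCdef, M, Matrix.sub_mul, Matrix.mul_sub, Matrix.add_mul, Matrix.mul_add,
    Matrix.smul_mul, Matrix.mul_smul, Matrix.mul_one, Matrix.one_mul]
  noncomm_ring
end

section
/- Let M be a real skew-symmetric n×n matrix and let A, B be real symmetric n×n matrices. Define the bilinear form P_A(X,Y) := Tr(M·(X·A·Y − Y·A·X)) on skew-symmetric matrices, and the bracket ⁅X,Y⁆_A := X·A·Y − Y·A·X. Suppose X, Y, Z are skew-symmetric matrices lying in the kernel of P_A, i.e. P_A(X,W) = P_A(Y,W) = P_A(Z,W) = 0 for every skew-symmetric W. Then the restriction of P_B to this kernel is a 2-cocycle with respect to the bracket ⁅·,·⁆_A: P_B(⁅X,Y⁆_A, Z) + P_B(⁅Y,Z⁆_A, X) + P_B(⁅Z,X⁆_A, Y) = 0. -/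
open Matrix

/-- The pencil form at `M`: `P_A(X,Y) = Tr(M·(X·A·Y − Y·A·X))`. -/
def pencilForm {n : ℕ} (M A X Y : Matrix (Fin n) (Fin n) ℝ) : ℝ :=
  (M * (X * A * Y - Y * A * X)).trace

/-- Key cyclic swap identity: if `M·ξ·A = A·ξ·M`, then
`Tr(M·ξ·A·P) = Tr(M·P·(A·ξ))`. -/
lemma trace_swap {n : ℕ} (M A ξ P : Matrix (Fin n) (Fin n) ℝ)
    (h : M * ξ * A = A * ξ * M) :
    (M * ξ * A * P).trace = (M * P * (A * ξ)).trace := by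
  rw [h, Matrix.trace_mul_cycle, Matrix.trace_mul_cycle]

/-- A skew-symmetric real matrix with `Tr(C·C) = 0` is zero. -/
lemma skew_trace_sq_zero {n : ℕ} (C : Matrix (Fin n) (Fin n) ℝ)
    (hC : Cᵀ = -C) (h : (C * C).trace = 0) : C = 0 := by
  have hsum : ∑ i, ∑ j, C i j * C i j = 0 := by
    have : (C * C).trace = ∑ i, ∑ j, C i j * C j i := by
      simp [Matrix.trace, Matrix.mul_apply, Matrix.diag]
    rw [this] at h
    have : ∑ i, ∑ j, C i j * C j i = -∑ i, ∑ j, C i j * C i j := by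
      rw [← Finset.sum_neg_distrib]
      refine Finset.sum_congr rfl fun i _ => ?_
      rw [← Finset.sum_neg_distrib]
      refine Finset.sum_congr rfl fun j _ => ?_
      have : C j i = -C i j := by
        have := congrFun (congrFun hC i) j
        simpa [Matrix.transpose_apply] using this
      rw [this]; ring
    rw [this] at h
    linarith
  ext i j
  have hnn : ∀ p ∈ (Finset.univ : Finset (Fin n)),
      (0:ℝ) ≤ ∑ q, C p q * C p q := fun p _ =>
    Finset.sum_nonneg fun q _ => mul_self_nonneg _
  have h1 := (Finset.sum_eq_zero_iff_of_nonneg hnn).mp hsum i (Finset.mem_univ i)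
  have h2 := (Finset.sum_eq_zero_iff_of_nonneg
    (fun q (_ : q ∈ Finset.univ) => mul_self_nonneg (C i q))).mp h1 j (Finset.mem_univ j)
  have := mul_self_eq_zero.mp h2
  simpa using this

/-- The kernel condition implies `M·ξ·A = A·ξ·M`. -/
lemma kernel_comm {n : ℕ} (M A ξ : Matrix (Fin n) (Fin n) ℝ)
    (hM : Mᵀ = -M) (hA : Aᵀ = A) (hξ : ξᵀ = -ξ)
    (hker : ∀ W : Matrix (Fin n) (Fin n) ℝ, Wᵀ = -W → pencilForm M A ξ W = 0) :
    M * ξ * A = A * ξ * M := by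
  set C := M * ξ * A - A * ξ * M with hCdef
  have hCt : Cᵀ = -C := by
    simp only [hCdef, Matrix.transpose_sub, Matrix.transpose_mul, hM, hA, hξ]
    noncomm_ring
  have hform : pencilForm M A ξ C = (C * C).trace := by
    simp only [pencilForm, hCdef]
    have e1 : (M * (ξ * A * C)).trace = ((M * ξ * A) * C).trace := by
      rw [← mul_assoc, ← mul_assoc]
    have e2 : (M * (C * A * ξ)).trace = ((A * ξ * M) * C).trace := by
      rw [show M * (C * A * ξ) = (M * C) * (A * ξ) by noncomm_ring,
        Matrix.trace_mul_comm]
      rw [show A * ξ * (M * C) = (A * ξ * M) * C by noncomm_ring]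
    rw [Matrix.mul_sub, Matrix.trace_sub, e1, e2, ← Matrix.trace_sub,
      ← Matrix.sub_mul]
  have h0 : (C * C).trace = 0 := by
    rw [← hform]; exact hker C hCt
  exact sub_eq_zero.mp (skew_trace_sq_zero C hCt h0)

/-- The restriction of `P_B` to the kernel of `P_A` is a 2-cocycle with respect to
the bracket `⁅X,Y⁆_A = X·A·Y − Y·A·X`: if `M` is skew-symmetric, `A, B` are symmetric,
and the skew-symmetric matrices `X, Y, Z` pair to zero under `P_A` with every
skew-symmetric `W`, then
`P_B(⁅X,Y⁆_A, Z) + P_B(⁅Y,Z⁆_A, X) + P_B(⁅Z,X⁆_A, Y) = 0`. -/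
theorem pencilForm_cocycle_on_kernel (n : ℕ) (M A B : Matrix (Fin n) (Fin n) ℝ)
    (hM : Mᵀ = -M) (hA : Aᵀ = A) (hB : Bᵀ = B)
    (X Y Z : Matrix (Fin n) (Fin n) ℝ)
    (hX : Xᵀ = -X) (hY : Yᵀ = -Y) (hZ : Zᵀ = -Z)
    (hXker : ∀ W : Matrix (Fin n) (Fin n) ℝ, Wᵀ = -W → pencilForm M A X W = 0)
    (hYker : ∀ W : Matrix (Fin n) (Fin n) ℝ, Wᵀ = -W → pencilForm M A Y W = 0)
    (hZker : ∀ W : Matrix (Fin n) (Fin n) ℝ, Wᵀ = -W → pencilForm M A Z W = 0) :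
    pencilForm M B (X * A * Y - Y * A * X) Z +
      pencilForm M B (Y * A * Z - Z * A * Y) X +
      pencilForm M B (Z * A * X - X * A * Z) Y = 0 := by
  have hX' := kernel_comm M A X hM hA hX hXker
  have hY' := kernel_comm M A Y hM hA hY hYker
  have hZ' := kernel_comm M A Z hM hA hZ hZker
  have i1 := trace_swap M A X (Y * B * Z) hX'
  have i2 := trace_swap M A Y (X * B * Z) hY'
  have i3 := trace_swap M A Y (Z * B * X) hY'
  have i4 := trace_swap M A X (Z * B * Y) hX'
  have i5 := trace_swap M A Z (Y * B * X) hZ'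
  have i6 := trace_swap M A Z (X * B * Y) hZ'
  simp only [← mul_assoc] at i1 i2 i3 i4 i5 i6
  simp only [pencilForm, Matrix.mul_sub, Matrix.sub_mul, Matrix.trace_sub, ← mul_assoc]
  linarith [i1, i2, i3, i4, i5, i6]
end

section
/- Let p, q, r, s be pairwise distinct positive real numbers and let m₁, m₂ be nonzero real numbers. Suppose λ ∈ ℝ satisfies both (λ − p²)(λ − q²)/m₁² = (λ − r²)(λ − s²)/m₂² and (λ + p·q)/(p + q) = (λ + r·s)/(r + s). Then m₁²/(p+q)² = m₂²/(r+s)², i.e. the two angular frequencies ω₁ = m₁/(p+q) and ω₂ = m₂/(r+s) satisfy ω₁² = ω₂². (Hence, at a real intersection point of two parabolas of the parabolic diagram, the vanishing of the corresponding eigenvalue of the linearized Euler equations forces the squared frequencies of the two planes of rotation to coincide.) -/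
/-- Let `p, q, r, s` be pairwise distinct positive reals and `m₁, m₂` nonzero reals.
If `λ ∈ ℝ` satisfies both `(λ−p²)(λ−q²)/m₁² = (λ−r²)(λ−s²)/m₂²` (a real intersection
of the two parabolas of the parabolic diagram) and
`(λ+pq)/(p+q) = (λ+rs)/(r+s)` (vanishing of the corresponding eigenvalue of the
linearized Euler equations), then `m₁²/(p+q)² = m₂²/(r+s)²`, i.e. the squared
frequencies `ω₁² = (m₁/(p+q))²` and `ω₂² = (m₂/(r+s))²` coincide. -/
theorem vanishing_eigenvalue_forces_equal_frequencies
    (p q r s m₁ m₂ lam : ℝ)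
    (hp : 0 < p) (hq : 0 < q) (hr : 0 < r) (hs : 0 < s)
    (hpq : p ≠ q) (hpr : p ≠ r) (hps : p ≠ s)
    (hqr : q ≠ r) (hqs : q ≠ s) (hrs : r ≠ s)
    (hm₁ : m₁ ≠ 0) (hm₂ : m₂ ≠ 0)
    (h1 : (lam - p ^ 2) * (lam - q ^ 2) / m₁ ^ 2 = (lam - r ^ 2) * (lam - s ^ 2) / m₂ ^ 2)
    (h2 : (lam + p * q) / (p + q) = (lam + r * s) / (r + s)) :
    m₁ ^ 2 / (p + q) ^ 2 = m₂ ^ 2 / (r + s) ^ 2 := by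
  have hpq0 : p + q ≠ 0 := by positivity
  have hrs0 : r + s ≠ 0 := by positivity
  have h2' : (lam + p * q) * (r + s) = (lam + r * s) * (p + q) := by
    field_simp at h2; linarith [h2]
  have h1' : (lam - p ^ 2) * (lam - q ^ 2) * m₂ ^ 2
      = (lam - r ^ 2) * (lam - s ^ 2) * m₁ ^ 2 := by
    field_simp at h1; linarith [h1]
  -- key identity from h2'
  have key : (lam - p ^ 2) * (lam - q ^ 2) * (r + s) ^ 2
      = (lam - r ^ 2) * (lam - s ^ 2) * (p + q) ^ 2 := by
    linear_combination ((lam + p * q) * (r + s) + (lam + r * s) * (p + q)) * h2'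
  by_cases hA : (lam - p ^ 2) * (lam - q ^ 2) = 0
  · -- then also (lam - r²)(lam - s²) = 0, so lam is a common square: contradiction
    have hB : (lam - r ^ 2) * (lam - s ^ 2) = 0 := by
      have := key
      rw [hA, zero_mul] at this
      have hpq2 : (p + q) ^ 2 ≠ 0 := pow_ne_zero _ hpq0
      exact (mul_eq_zero.mp this.symm).resolve_right hpq2
    exfalso
    rcases mul_eq_zero.mp hA with h | h <;> rcases mul_eq_zero.mp hB with h' | h' <;>
      [ (have e : (p - r) * (p + r) = 0 := by linarith [sub_eq_zero.mp h, sub_eq_zero.mp h'];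
         exact hpr (by linarith [(mul_eq_zero.mp e).resolve_right (by positivity : p + r ≠ 0)]));
        (have e : (p - s) * (p + s) = 0 := by linarith [sub_eq_zero.mp h, sub_eq_zero.mp h'];
         exact hps (by linarith [(mul_eq_zero.mp e).resolve_right (by positivity : p + s ≠ 0)]));
        (have e : (q - r) * (q + r) = 0 := by linarith [sub_eq_zero.mp h, sub_eq_zero.mp h'];
         exact hqr (by linarith [(mul_eq_zero.mp e).resolve_right (by positivity : q + r ≠ 0)]));
        (have e : (q - s) * (q + s) = 0 := by linarith [sub_eq_zero.mp h, sub_eq_zero.mp h'];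
         exact hqs (by linarith [(mul_eq_zero.mp e).resolve_right (by positivity : q + s ≠ 0)])) ]
  · have : m₁ ^ 2 * (r + s) ^ 2 = m₂ ^ 2 * (p + q) ^ 2 := by
      have h3 : (lam - p ^ 2) * (lam - q ^ 2) * (m₁ ^ 2 * (r + s) ^ 2)
          = (lam - p ^ 2) * (lam - q ^ 2) * (m₂ ^ 2 * (p + q) ^ 2) := by
        linear_combination m₁ ^ 2 * key - (p + q) ^ 2 * h1'
      exact mul_left_cancel₀ hA h3
    field_simp
    linarith [this]
end

section
/- Let m₁, m₂, a₁, a₂, a₃, a₄ be real numbers. Define the bilinear form P on ℝ⁴ by P((a,b,c,d),(e,f,g,h)) := 2(m₁a₃c + m₂a₁b)e + 2(m₂a₂d − m₁a₃a)g + 2(m₁a₄d − m₂a₁a)f − 2(m₁a₄b + m₂a₂c)h. Then P is degenerate (i.e. there exists a nonzero X ∈ ℝ⁴ with P(X,Y) = 0 for all Y ∈ ℝ⁴) if and only if m₂²·a₁·a₂ = m₁²·a₃·a₄. -/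
/-- The pencil form `P_λ` restricted to the 4-dimensional subspace `V_{ij}`, written
in coordinates `X = (a,b,c,d)`, `Y = (e,f,g,h)`. -/
def VijForm (m₁ m₂ a₁ a₂ a₃ a₄ : ℝ) (X Y : ℝ × ℝ × ℝ × ℝ) : ℝ :=
  2 * (m₁ * a₃ * X.2.2.1 + m₂ * a₁ * X.2.1) * Y.1 +
    2 * (m₂ * a₂ * X.2.2.2 - m₁ * a₃ * X.1) * Y.2.2.1 +
    2 * (m₁ * a₄ * X.2.2.2 - m₂ * a₁ * X.1) * Y.2.1 -
    2 * (m₁ * a₄ * X.2.1 + m₂ * a₂ * X.2.2.1) * Y.2.2.2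

/-- The form `P` on `ℝ⁴` is degenerate (some nonzero `X` pairs to zero with every `Y`)
if and only if `m₂²·a₁·a₂ = m₁²·a₃·a₄`. -/
theorem VijForm_degenerate_iff (m₁ m₂ a₁ a₂ a₃ a₄ : ℝ) :
    (∃ X : ℝ × ℝ × ℝ × ℝ, X ≠ 0 ∧ ∀ Y : ℝ × ℝ × ℝ × ℝ,
        VijForm m₁ m₂ a₁ a₂ a₃ a₄ X Y = 0) ↔
      m₂ ^ 2 * a₁ * a₂ = m₁ ^ 2 * a₃ * a₄ := by
  constructor
  · rintro ⟨⟨a, b, c, d⟩, hne, hY⟩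
    have h1 := hY (1, 0, 0, 0)
    have h2 := hY (0, 1, 0, 0)
    have h3 := hY (0, 0, 1, 0)
    have h4 := hY (0, 0, 0, 1)
    simp only [VijForm] at h1 h2 h3 h4
    ring_nf at h1 h2 h3 h4
    by_contra hD
    have hD' : m₂ ^ 2 * a₁ * a₂ - m₁ ^ 2 * a₃ * a₄ ≠ 0 := sub_ne_zero.mpr hD
    apply hne
    have ha : a = 0 := by
      have h : (m₂ ^ 2 * a₁ * a₂ - m₁ ^ 2 * a₃ * a₄) * a = 0 := by
        linear_combination (m₁ * a₄ / 2) * h3 - (m₂ * a₂ / 2) * h2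
      exact (mul_eq_zero.mp h).resolve_left hD'
    have hb : b = 0 := by
      have h : (m₂ ^ 2 * a₁ * a₂ - m₁ ^ 2 * a₃ * a₄) * b = 0 := by
        linear_combination (m₂ * a₂ / 2) * h1 + (m₁ * a₃ / 2) * h4
      exact (mul_eq_zero.mp h).resolve_left hD'
    have hc : c = 0 := by
      have h : (m₂ ^ 2 * a₁ * a₂ - m₁ ^ 2 * a₃ * a₄) * c = 0 := by
        linear_combination -(m₁ * a₄ / 2) * h1 - (m₂ * a₁ / 2) * h4
      exact (mul_eq_zero.mp h).resolve_left hD'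
    have hd : d = 0 := by
      have h : (m₂ ^ 2 * a₁ * a₂ - m₁ ^ 2 * a₃ * a₄) * d = 0 := by
        linear_combination (m₂ * a₁ / 2) * h3 - (m₁ * a₃ / 2) * h2
      exact (mul_eq_zero.mp h).resolve_left hD'
    simp [ha, hb, hc, hd, Prod.ext_iff]
  · intro hD
    by_cases h : m₂ * a₂ = 0 ∧ m₁ * a₃ = 0
    · obtain ⟨h2, h3⟩ := h
      by_cases h' : m₂ * a₁ = 0 ∧ m₁ * a₄ = 0
      · obtain ⟨h1, h4⟩ := h'
        refine ⟨(1, 0, 0, 0), by simp [Prod.ext_iff], fun Y => ?_⟩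
        simp only [VijForm]
        linear_combination (-2 * Y.2.2.1) * h3 + (-2 * Y.2.1) * h1
      · refine ⟨(m₁ * a₄, 0, 0, m₂ * a₁), ?_, fun Y => ?_⟩
        · simp only [ne_eq, Prod.mk_eq_zero]
          tauto
        · simp only [VijForm]
          linear_combination (2 * m₂ * a₁ * Y.2.2.1) * h2 - (2 * m₁ * a₄ * Y.2.2.1) * h3
    · refine ⟨(m₂ * a₂, 0, 0, m₁ * a₃), ?_, fun Y => ?_⟩
      · simp only [ne_eq, Prod.mk_eq_zero]
        tauto
      · simp only [VijForm]
        linear_combination (-2 * Y.2.1) * hD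
end

section
/- Let n and m be natural numbers with 2m ≤ n. Let M be the real n×n matrix whose only nonzero entries are M_{2i−1,2i} = μ_i and M_{2i,2i−1} = −μ_i for 1 ≤ i ≤ m (with μ_i ∈ ℝ), and let A be any real diagonal n×n matrix. Let X be either E_{2i−1,2i} − E_{2i,2i−1} for some 1 ≤ i ≤ m, or E_{kl} − E_{lk} for some 2m < k, l ≤ n, where E_{kl} denotes the matrix unit. Then for every real skew-symmetric n×n matrix Y, Tr(M·(X·A·Y − Y·A·X)) = 0. (Thus the subspace K spanned by these elements lies in the common kernel of all brackets of the pencil at the point M.) -/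
open Matrix

/-- The index `2i−1` (1-based), i.e. the first index of the `i`-th `2×2` block. -/
def idxA {n m : ℕ} (h : 2 * m ≤ n) (i : Fin m) : Fin n :=
  ⟨2 * i.val, by have := i.isLt; omega⟩

/-- The index `2i` (1-based), i.e. the second index of the `i`-th `2×2` block. -/
def idxB {n m : ℕ} (h : 2 * m ≤ n) (i : Fin m) : Fin n :=
  ⟨2 * i.val + 1, by have := i.isLt; omega⟩

/-- The block-diagonal skew-symmetric momentum matrix whose only nonzero entries are
`M_{2i−1,2i} = μ_i` and `M_{2i,2i−1} = −μ_i` for `1 ≤ i ≤ m`. -/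
def blockMom {n m : ℕ} (h : 2 * m ≤ n) (μ : Fin m → ℝ) : Matrix (Fin n) (Fin n) ℝ :=
  ∑ i : Fin m,
    (Matrix.single (idxA h i) (idxB h i) (μ i) -
      Matrix.single (idxB h i) (idxA h i) (μ i))

/-!
Write `X = E_{pq} − E_{qp}`. Distinct blocks of `M` have disjoint supports, so `M X = X M`,
and this product is `−μ_i (E_{2i−1,2i−1} + E_{2i,2i})` for the `i`-th block generator and `0`
for a generator supported on the indices beyond `2m`. Being diagonal, `M X` commutes with `A`,
and cyclicity of the trace gives `Tr(M Y A X) = Tr(X M Y A) = Tr(M X Y A) = Tr(M X A Y)`.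
-/

namespace Matrix

variable {n R : Type*} [Fintype n] [CommRing R]

theorem trace_mul_bracket_eq_zero {M X A : Matrix n n R} (hXM : Commute X M)
    (hA : Commute (M * X) A) (Y : Matrix n n R) :
    (M * (X * A * Y - Y * A * X)).trace = 0 := by
  have : (M * (Y * A * X)).trace = (M * (X * A * Y)).trace :=
    calc (M * (Y * A * X)).trace = (X * M * (Y * A)).trace := by
          rw [Matrix.mul_assoc X, trace_mul_comm X]; simp only [Matrix.mul_assoc]
      _ = (Y * (A * (M * X))).trace := by
          rw [hXM.eq, trace_mul_comm, Matrix.mul_assoc]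
      _ = (M * (X * A * Y)).trace := by
          rw [← hA.eq, trace_mul_comm]; simp only [Matrix.mul_assoc]
  rw [Matrix.mul_sub, trace_sub, this, sub_self]

variable [DecidableEq n]

theorem IsDiag.commute {A B : Matrix n n R} (hA : A.IsDiag) (hB : B.IsDiag) :
    Commute A B := by
  rw [← hA.diagonal_diag, ← hB.diagonal_diag]
  exact commute_diagonal _ _

omit [Fintype n] in
theorem isDiag_single_same (p : n) (c : R) : (single p p c).IsDiag := by
  intro a b hab
  simp only [single_apply]
  grind

def skewSingle (p q : n) : Matrix n n R := single p q 1 - single q p 1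

theorem skewSingle_mul_skewSingle_of_disjoint {p q r s : n} (hpr : p ≠ r) (hps : p ≠ s)
    (hqr : q ≠ r) (hqs : q ≠ s) : skewSingle p q * skewSingle r s = (0 : Matrix n n R) := by
  simp [skewSingle, Matrix.sub_mul, Matrix.mul_sub, *]

theorem isDiag_skewSingle_mul_self {p q : n} (hpq : p ≠ q) :
    (skewSingle p q * skewSingle p q : Matrix n n R).IsDiag := by
  simp only [skewSingle, Matrix.sub_mul, Matrix.mul_sub, single_mul_single_same,
    single_mul_single_of_ne _ _ _ _ hpq, single_mul_single_of_ne _ _ _ _ hpq.symm]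
  exact (isDiag_zero.sub (isDiag_single_same q _)).sub ((isDiag_single_same p _).sub isDiag_zero)

end Matrix

section blockMom

variable {n m : ℕ} (h : 2 * m ≤ n)

theorem idxA_ne_idxB (i j : Fin m) : idxA h i ≠ idxB h j := by
  simp only [idxA, idxB, ne_eq, Fin.ext_iff]
  omega

theorem idxA_injective : Function.Injective (idxA h) := fun i j hij => by
  simp only [idxA, Fin.ext_iff] at hij
  exact Fin.ext (by omega)

theorem idxB_injective : Function.Injective (idxB h) := fun i j hij => by
  simp only [idxB, Fin.ext_iff] at hij
  exact Fin.ext (by omega)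

theorem idxA_lt (i : Fin m) : (idxA h i).val < 2 * m := by
  simp only [idxA]
  omega

theorem idxB_lt (i : Fin m) : (idxB h i).val < 2 * m := by
  simp only [idxB]
  omega

variable (μ : Fin m → ℝ)

theorem blockMom_eq_sum_smul :
    blockMom h μ = ∑ i, μ i • skewSingle (idxA h i) (idxB h i) := by
  simp [blockMom, skewSingle, smul_sub, smul_single]

theorem blockMom_mul_skewSingle_block (i : Fin m) :
    blockMom h μ * skewSingle (idxA h i) (idxB h i) =
      μ i • (skewSingle (idxA h i) (idxB h i) * skewSingle (idxA h i) (idxB h i)) := by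
  rw [blockMom_eq_sum_smul, Finset.sum_mul, Finset.sum_eq_single i]
  · exact smul_mul_assoc _ _ _
  · intro j _ hji
    rw [smul_mul_assoc, skewSingle_mul_skewSingle_of_disjoint ((idxA_injective h).ne hji)
      (idxA_ne_idxB h j i) (idxA_ne_idxB h i j).symm ((idxB_injective h).ne hji), smul_zero]
  · simp

theorem skewSingle_block_mul_blockMom (i : Fin m) :
    skewSingle (idxA h i) (idxB h i) * blockMom h μ =
      μ i • (skewSingle (idxA h i) (idxB h i) * skewSingle (idxA h i) (idxB h i)) := by
  rw [blockMom_eq_sum_smul, Finset.mul_sum, Finset.sum_eq_single i]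
  · exact mul_smul_comm _ _ _
  · intro j _ hji
    rw [mul_smul_comm, skewSingle_mul_skewSingle_of_disjoint ((idxA_injective h).ne hji.symm)
      (idxA_ne_idxB h i j) (idxA_ne_idxB h j i).symm ((idxB_injective h).ne hji.symm), smul_zero]
  · simp

theorem blockMom_mul_skewSingle_of_le {k l : Fin n} (hk : 2 * m ≤ k.val) (hl : 2 * m ≤ l.val) :
    blockMom h μ * skewSingle k l = 0 := by
  rw [blockMom_eq_sum_smul, Finset.sum_mul]
  refine Finset.sum_eq_zero fun i _ => ?_
  have := idxA_lt h i
  have := idxB_lt h i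
  rw [smul_mul_assoc, skewSingle_mul_skewSingle_of_disjoint, smul_zero] <;>
    simp only [ne_eq, Fin.ext_iff] <;> omega

theorem skewSingle_mul_blockMom_of_le {k l : Fin n} (hk : 2 * m ≤ k.val) (hl : 2 * m ≤ l.val) :
    skewSingle k l * blockMom h μ = 0 := by
  rw [blockMom_eq_sum_smul, Finset.mul_sum]
  refine Finset.sum_eq_zero fun i _ => ?_
  have := idxA_lt h i
  have := idxB_lt h i
  rw [mul_smul_comm, skewSingle_mul_skewSingle_of_disjoint, smul_zero] <;>
    simp only [ne_eq, Fin.ext_iff] <;> omega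

end blockMom

/-- The subspace `K` lies in the common kernel of all brackets of the pencil at `M`:
for every diagonal `A`, every generator `X` of `K` (either `E_{2i−1,2i} − E_{2i,2i−1}`
with `1 ≤ i ≤ m`, or `E_{kl} − E_{lk}` with `2m < k, l ≤ n`), and every skew-symmetric
`Y`, one has `Tr(M·(X·A·Y − Y·A·X)) = 0`. -/
theorem K_in_common_kernel (n m : ℕ) (h : 2 * m ≤ n) (μ : Fin m → ℝ)
    (A : Matrix (Fin n) (Fin n) ℝ) (hA : A.IsDiag)
    (X : Matrix (Fin n) (Fin n) ℝ)
    (hX : (∃ i : Fin m,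
            X = Matrix.single (idxA h i) (idxB h i) (1 : ℝ) -
              Matrix.single (idxB h i) (idxA h i) (1 : ℝ)) ∨
          (∃ k l : Fin n, 2 * m ≤ k.val ∧ 2 * m ≤ l.val ∧
            X = Matrix.single k l (1 : ℝ) - Matrix.single l k (1 : ℝ))) :
    ∀ Y : Matrix (Fin n) (Fin n) ℝ, Yᵀ = -Y →
      (blockMom h μ * (X * A * Y - Y * A * X)).trace = 0 := by
  intro Y _
  obtain ⟨i, rfl⟩ | ⟨k, l, hk, hl, rfl⟩ := hX
  · have hMX := blockMom_mul_skewSingle_block h μ i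
    refine trace_mul_bracket_eq_zero ?_ ?_ Y
    · exact (skewSingle_block_mul_blockMom h μ i).trans hMX.symm
    · rw [skewSingle] at hMX; rw [hMX]
      exact ((isDiag_skewSingle_mul_self (idxA_ne_idxB h i i)).smul _).commute hA
  · have hMX := blockMom_mul_skewSingle_of_le h μ hk hl
    refine trace_mul_bracket_eq_zero ?_ ?_ Y
    · exact (skewSingle_mul_blockMom_of_le h μ hk hl).trans hMX.symm
    · rw [skewSingle] at hMX; rw [hMX]
      exact Commute.zero_left A
end

section
/- Let n and m be natural numbers with 2m ≤ n, and let K be the subspace of real skew-symmetric n×n matrices spanned by {E_{2i−1,2i} − E_{2i,2i−1} : 1 ≤ i ≤ m} together with {E_{kl} − E_{lk} : 2m < k < l ≤ n}. Then for every real diagonal n×n matrix A, K is closed under the bracket ⁅X,Y⁆_A := X·A·Y − Y·A·X; that is, K is a Lie subalgebra of the Lie algebra g_λ for every bracket of the pencil. -/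
open Matrix

/-- The generating set of `K`: the matrices `E_{2i−1,2i} − E_{2i,2i−1}` for `1 ≤ i ≤ m`
together with `E_{kl} − E_{lk}` for `2m < k < l ≤ n`. -/
def genSetK {n m : ℕ} (h : 2 * m ≤ n) : Set (Matrix (Fin n) (Fin n) ℝ) :=
  {X | ∃ i : Fin m,
      X = Matrix.single (idxA h i) (idxB h i) (1 : ℝ) -
        Matrix.single (idxB h i) (idxA h i) (1 : ℝ)} ∪
  {X | ∃ k l : Fin n, 2 * m ≤ k.val ∧ 2 * m ≤ l.val ∧ k.val < l.val ∧
      X = Matrix.single k l (1 : ℝ) - Matrix.single l k (1 : ℝ)}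

/-!
The span `K` consists exactly of the skew-symmetric matrices supported on the diagonal blocks
`{1, 2}, …, {2m - 1, 2m}, {2m + 1, …, n}`. A skew-symmetric matrix is block-diagonal as soon as it
is block-triangular, and block-triangular matrices (for a fixed block labelling) form an algebra
containing every diagonal matrix; so `X * A * Y - Y * A * X` stays block-triangular, and it is
skew-symmetric because `A` is symmetric.
-/

namespace Matrix

variable {ι R α : Type*}

theorem transpose_mul_mul_sub_mul_mul [CommRing R] [Fintype ι] {X Y A : Matrix ι ι R}
    (hX : Xᵀ = -X) (hY : Yᵀ = -Y) (hA : A.IsSymm) :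
    (X * A * Y - Y * A * X)ᵀ = -(X * A * Y - Y * A * X) := by
  rw [transpose_sub, transpose_mul, transpose_mul, transpose_mul, transpose_mul, hX, hY, hA.eq]
  noncomm_ring

theorem transpose_single_sub_single [AddGroup R] [DecidableEq ι] (p q : ι) (a : R) :
    (single p q a - single q p a)ᵀ = -(single p q a - single q p a) := by
  rw [transpose_sub, transpose_single, transpose_single, neg_sub]

theorem single_sub_single_blockTriangular [AddGroup R] [Preorder α] [DecidableEq ι]
    {b : ι → α} {p q : ι} (hpq : b p = b q) (a : R) :
    (single p q a - single q p a).BlockTriangular b :=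
  (blockTriangular_single hpq.le a).sub (blockTriangular_single hpq.ge a)

theorem IsDiag.blockTriangular [Zero R] [Preorder α] {A : Matrix ι ι R} (hA : A.IsDiag)
    (b : ι → α) : A.BlockTriangular b :=
  fun _ _ hji => hA (by rintro rfl; exact lt_irrefl _ hji)

theorem BlockTriangular.eq_of_transpose_eq_neg [NegZeroClass R] [LinearOrder α]
    {X : Matrix ι ι R} {b : ι → α} (hX : X.BlockTriangular b) (hskew : Xᵀ = -X) {p q : ι}
    (hpq : X p q ≠ 0) : b p = b q := by
  refine le_antisymm (not_lt.mp fun hqp => hpq (hX hqp)) (not_lt.mp fun hpq' => hpq ?_)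
  have hpq_eq : X p q = -X q p := congr_fun (congr_fun hskew q) p
  rw [hpq_eq, hX hpq', neg_zero]

theorem mem_of_transpose_eq_neg [DivisionRing R] [NeZero (2 : R)] [Fintype ι] [DecidableEq ι]
    (S : Submodule R (Matrix ι ι R)) {X : Matrix ι ι R} (hskew : Xᵀ = -X)
    (hS : ∀ p q, X p q ≠ 0 → single p q 1 - single q p 1 ∈ S) : X ∈ S := by
  have hsum : ∑ p, ∑ q, X p q • (single p q (1 : R) - single q p 1) = (2 : R) • X := by
    have hT : Xᵀ = ∑ p, ∑ q, single q p (X p q) := by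
      conv_lhs => rw [matrix_eq_sum_single X]
      simp only [transpose_sum, transpose_single]
    simp only [smul_sub, smul_single, smul_eq_mul, mul_one, Finset.sum_sub_distrib,
      ← matrix_eq_sum_single, ← hT, hskew, sub_neg_eq_add, two_smul]
  have hX : X = (2 : R)⁻¹ • ∑ p, ∑ q, X p q • (single p q (1 : R) - single q p 1) := by
    rw [hsum, smul_smul, inv_mul_cancel₀ two_ne_zero, one_smul]
  rw [hX]
  refine S.smul_mem _ (S.sum_mem fun p _ => S.sum_mem fun q _ => ?_)
  by_cases hpq : X p q = 0
  · rw [hpq, zero_smul]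
    exact S.zero_mem
  · exact S.smul_mem _ (hS p q hpq)

end Matrix

def blockIndex (m : ℕ) {n : ℕ} (i : Fin n) : ℕ := min (i.val / 2) m

theorem exists_eq_single_sub_single_of_mem_genSetK {n m : ℕ} (h : 2 * m ≤ n)
    {X : Matrix (Fin n) (Fin n) ℝ} (hX : X ∈ genSetK h) :
    ∃ p q, blockIndex m p = blockIndex m q ∧ X = single p q 1 - single q p 1 := by
  rcases hX with ⟨i, rfl⟩ | ⟨k, l, hk, hl, -, rfl⟩
  · refine ⟨_, _, ?_, rfl⟩
    simp only [blockIndex, idxA, idxB]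
    omega
  · exact ⟨k, l, by simp only [blockIndex]; omega, rfl⟩

theorem single_sub_single_mem_span_genSetK {n m : ℕ} (h : 2 * m ≤ n) {p q : Fin n}
    (hpq : blockIndex m p = blockIndex m q) :
    single p q (1 : ℝ) - single q p 1 ∈ Submodule.span ℝ (genSetK h) := by
  wlog hle : p ≤ q generalizing p q
  · simpa using neg_mem (this hpq.symm (le_of_not_ge hle))
  obtain rfl | hlt := hle.eq_or_lt
  · simp
  apply Submodule.subset_span
  unfold blockIndex at hpq
  by_cases hblock : p.val / 2 < m
  · left
    refine ⟨⟨p.val / 2, hblock⟩, ?_⟩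
    rw [show idxA h ⟨p.val / 2, hblock⟩ = p by ext; simp only [idxA]; omega,
      show idxB h ⟨p.val / 2, hblock⟩ = q by ext; simp only [idxB]; omega]
  · right
    exact ⟨p, q, by omega, by omega, hlt, rfl⟩

theorem mem_span_genSetK_iff {n m : ℕ} (h : 2 * m ≤ n) {X : Matrix (Fin n) (Fin n) ℝ} :
    X ∈ Submodule.span ℝ (genSetK h) ↔
      Xᵀ = -X ∧ X.BlockTriangular (blockIndex m) := by
  constructor
  · intro hX
    induction hX using Submodule.span_induction with
    | mem Z hZ =>
      obtain ⟨p, q, hpq, rfl⟩ := exists_eq_single_sub_single_of_mem_genSetK h hZ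
      exact ⟨transpose_single_sub_single p q 1, single_sub_single_blockTriangular hpq 1⟩
    | zero => exact ⟨by rw [transpose_zero, neg_zero], blockTriangular_zero⟩
    | add Y Z _ _ hY hZ => exact ⟨by rw [transpose_add, hY.1, hZ.1, neg_add], hY.2.add hZ.2⟩
    | smul a Y _ hY =>
      exact ⟨by rw [transpose_smul, hY.1, smul_neg],
        Subalgebra.smul_mem (blockTriangularSubalgebra ℝ ℝ (blockIndex m)) hY.2 a⟩
  · rintro ⟨hskew, hX⟩
    exact mem_of_transpose_eq_neg _ hskew fun p q hpq =>
      single_sub_single_mem_span_genSetK h (hX.eq_of_transpose_eq_neg hskew hpq)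

/-- For every real diagonal matrix `A`, the subspace `K` (the span of the generators
`E_{2i−1,2i} − E_{2i,2i−1}`, `1 ≤ i ≤ m`, and `E_{kl} − E_{lk}`, `2m < k < l ≤ n`)
is closed under the pencil bracket `⁅X,Y⁆_A := X·A·Y − Y·A·X`; that is, `K` is a Lie
subalgebra of `g_λ` for every bracket of the pencil. -/
theorem K_subalgebra (n m : ℕ) (h : 2 * m ≤ n)
    (A : Matrix (Fin n) (Fin n) ℝ) (hA : A.IsDiag) :
    ∀ X ∈ Submodule.span ℝ (genSetK h), ∀ Y ∈ Submodule.span ℝ (genSetK h),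
      X * A * Y - Y * A * X ∈ Submodule.span ℝ (genSetK h) := by
  simp only [mem_span_genSetK_iff]
  rintro X ⟨hXs, hXb⟩ Y ⟨hYs, hYb⟩
  have hAb := hA.blockTriangular (blockIndex m)
  exact ⟨transpose_mul_mul_sub_mul_mul hXs hYs hA.isSymm,
    ((hXb.mul hAb).mul hYb).sub ((hYb.mul hAb).mul hXb)⟩
end

section
/- Let T be an invertible real n×n matrix and let A, B be real symmetric n×n matrices with Tᵀ·B·T = A. Then the map φ(X) := T·X·Tᵀ is a linear bijection from the space of real skew-symmetric n×n matrices onto itself satisfying φ(X·A·Y − Y·A·X) = φ(X)·B·φ(Y) − φ(Y)·B·φ(X) for all skew-symmetric X, Y; that is, φ is a Lie algebra isomorphism from (so(n), ⁅·,·⁆_A) onto (so(n), ⁅·,·⁆_B). (In particular, for α, β less than the smallest squared eigenvalue of J, the map F_{αβ}(X) = (J²−βI)^{−1/2}(J²−αI)^{1/2}·X·(J²−αI)^{1/2}(J²−βI)^{−1/2} is an isomorphism of Lie algebras (so(n), ⁅·,·⁆_α) → (so(n), ⁅·,·⁆_β).) -/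
open Matrix

/-- Let `T` be invertible and `A, B` symmetric with `Tᵀ·B·T = A`.  Then
`φ(X) = T·X·Tᵀ` is a linear bijection of the space of skew-symmetric matrices onto
itself satisfying `φ(X·A·Y − Y·A·X) = φ(X)·B·φ(Y) − φ(Y)·B·φ(X)`; that is, `φ` is a
Lie algebra isomorphism `(so(n), ⁅·,·⁆_A) → (so(n), ⁅·,·⁆_B)`. -/
theorem conjugation_isomorphism_of_pencil_brackets (n : ℕ)
    (T A B : Matrix (Fin n) (Fin n) ℝ) (hT : IsUnit T)
    (hA : Aᵀ = A) (hB : Bᵀ = B) (hTBT : Tᵀ * B * T = A) :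
    Set.BijOn (fun X : Matrix (Fin n) (Fin n) ℝ => T * X * Tᵀ)
        {X : Matrix (Fin n) (Fin n) ℝ | Xᵀ = -X}
        {X : Matrix (Fin n) (Fin n) ℝ | Xᵀ = -X} ∧
      (∀ (c : ℝ) (X Y : Matrix (Fin n) (Fin n) ℝ),
        T * (c • X + Y) * Tᵀ = c • (T * X * Tᵀ) + T * Y * Tᵀ) ∧
      (∀ X Y : Matrix (Fin n) (Fin n) ℝ, Xᵀ = -X → Yᵀ = -Y →
        T * (X * A * Y - Y * A * X) * Tᵀ =
          (T * X * Tᵀ) * B * (T * Y * Tᵀ) - (T * Y * Tᵀ) * B * (T * X * Tᵀ)) := by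
  have hinv : Invertible T := hT.invertible
  refine ⟨⟨?_, ?_, ?_⟩, ?_, ?_⟩
  · intro X hX
    simp only [Set.mem_setOf_eq] at hX ⊢
    simp [transpose_mul, hX, Matrix.mul_assoc]
  · intro X hX Y hY h
    simp only at h
    have := congrArg (fun M => ⅟T * M * ⅟(Tᵀ)) h
    simpa [Matrix.mul_assoc, ← Matrix.mul_assoc, mul_nonsing_inv] using this
  · intro Y hY
    simp only [Set.mem_setOf_eq] at hY
    refine ⟨⅟T * Y * ⅟(Tᵀ), ?_, ?_⟩
    · simp only [Set.mem_setOf_eq, transpose_mul, transpose_invOf, hY]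
      simp [Matrix.mul_assoc]
    · simp only
      calc T * (⅟T * Y * ⅟(Tᵀ)) * Tᵀ
          = (T * ⅟T) * Y * (⅟(Tᵀ) * Tᵀ) := by noncomm_ring
        _ = Y := by simp
  · intro c X Y
    simp [Matrix.mul_add, Matrix.add_mul, Matrix.mul_smul, Matrix.smul_mul]
  · intro X Y hX hY
    subst hTBT
    noncomm_ring
end

section
/- Let k ≥ 3 be a natural number and let A be a real symmetric positive-definite k×k matrix. If X is a real skew-symmetric k×k matrix such that X·A·Y − Y·A·X = 0 for every real skew-symmetric k×k matrix Y, then X = 0. (That is, the Lie algebra of skew-symmetric k×k matrices with the bracket ⁅X,Y⁆_A := X·A·Y − Y·A·X has trivial center whenever k ≥ 3.) -/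
/-!
With `M := X * A`, symmetry of `A` and skew-symmetry of `X` give `Mᵀ = -(A * X)`, so the hypothesis
reads `M * Y + Y * Mᵀ = 0` for every skew-symmetric `Y`. Testing it against the elementary
skew-symmetric matrices `Eᵢⱼ - Eⱼᵢ`, and using a third index, kills the off-diagonal entries of `M`
and forces `Mₐₐ = -M_bb` for `a ≠ b`; around a triangle of three distinct indices this gives
`Mₐₐ = -Mₐₐ`. Hence `M = 0`, and `X = 0` because `A` is invertible.
-/

open Matrix

theorem Fintype.exists_ne_ne_of_two_lt_card {α : Type*} [Fintype α] (h : 2 < Fintype.card α)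
    (a c : α) : ∃ b, b ≠ a ∧ b ≠ c := by
  classical
  obtain ⟨b, hb, hbc⟩ := (Finset.univ.erase a).exists_mem_ne
    (by rw [Finset.card_erase_of_mem (Finset.mem_univ a), Finset.card_univ]; omega) c
  exact ⟨b, Finset.ne_of_mem_erase hb, hbc⟩

namespace Matrix

variable {n R : Type*} [DecidableEq n] [Ring R]

theorem transpose_single_sub_single_s17 (i j : n) (c : R) :
    (single i j c - single j i c)ᵀ = -(single i j c - single j i c) := by
  rw [transpose_sub, transpose_single, transpose_single, neg_sub]

variable [Fintype n]

theorem mul_single_sub_single_add_single_sub_single_mul_transpose_apply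
    (M : Matrix n n R) (i j a b : n) :
    (M * (single i j 1 - single j i 1) + (single i j 1 - single j i 1) * Mᵀ : Matrix n n R) a b =
      ((if j = b then M a i else 0) - if i = b then M a j else 0) +
        ((if i = a then M b j else 0) - if j = a then M b i else 0) := by
  simp [Matrix.mul_sub, Matrix.sub_mul, Matrix.mul_apply, single_apply, ite_and]

theorem eq_zero_of_mul_add_mul_transpose_eq_zero [IsAddTorsionFree R]
    (hn : 2 < Fintype.card n) (M : Matrix n n R)
    (hM : ∀ Y : Matrix n n R, Yᵀ = -Y → M * Y + Y * Mᵀ = 0) : M = 0 := by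
  have entry (i j a b : n) := by
    have := congrFun₂ (hM _ (transpose_single_sub_single_s17 i j 1)) a b
    rwa [mul_single_sub_single_add_single_sub_single_mul_transpose_apply] at this
  have off_diag {a c : n} (hac : a ≠ c) : M a c = 0 := by
    obtain ⟨b, hba, hbc⟩ := Fintype.exists_ne_ne_of_two_lt_card hn a c
    simpa [hbc.symm, hba, hac.symm] using entry b c a b
  have diag {a b : n} (hab : a ≠ b) : M a a = -M b b := by
    simpa [hab, hab.symm, add_eq_zero_iff_eq_neg] using entry a b a b
  ext a b
  rcases eq_or_ne a b with rfl | hab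
  · obtain ⟨b, hba, c, hca, hcb⟩ : ∃ b, b ≠ a ∧ ∃ c, c ≠ a ∧ c ≠ b := by
      obtain ⟨b, hba, -⟩ := Fintype.exists_ne_ne_of_two_lt_card hn a a
      exact ⟨b, hba, Fintype.exists_ne_ne_of_two_lt_card hn a b⟩
    have : M a a = -M a a :=
      calc M a a = -M c c := diag hca.symm
        _ = M b b := (diag hcb.symm).symm
        _ = -M a a := diag hba
    simpa using self_eq_neg.mp this
  · simpa using off_diag hab

end Matrix

/-- For `k ≥ 3` and `A` a real symmetric positive-definite `k×k` matrix, the Lie algebra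
of skew-symmetric `k×k` matrices with the bracket `⁅X,Y⁆_A := X·A·Y − Y·A·X` has trivial
center: if `X` is skew-symmetric and `X·A·Y − Y·A·X = 0` for every skew-symmetric `Y`,
then `X = 0`. -/
theorem center_trivial_of_posDef (k : ℕ) (hk : 3 ≤ k)
    (A : Matrix (Fin k) (Fin k) ℝ) (hA : A.PosDef)
    (X : Matrix (Fin k) (Fin k) ℝ) (hX : Xᵀ = -X)
    (hcen : ∀ Y : Matrix (Fin k) (Fin k) ℝ, Yᵀ = -Y → X * A * Y - Y * A * X = 0) :
    X = 0 := by
  have hAT : Aᵀ = A := by simpa using hA.isHermitian.eq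
  have hXA : (X * A)ᵀ = -(A * X) := by
    rw [transpose_mul, hAT, hX, Matrix.mul_neg]
  have hM : X * A = 0 := by
    refine eq_zero_of_mul_add_mul_transpose_eq_zero (by rwa [Fintype.card_fin]) _ fun Y hY => ?_
    rw [hXA, Matrix.mul_neg, ← sub_eq_add_neg, ← Matrix.mul_assoc]
    exact hcen Y hY
  exact hA.isUnit.mul_left_eq_zero.mp hM
end
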